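/- Let X₁,X₂,X₃,X₄ be the 4×4 matrices σ_Z⊗I₂, σ_X⊗I₂, σ_Y⊗σ_Z, σ_Y⊗σ_Y and set Y_{ℓm,±} = (1/√2)(X_ℓ ± X_m)ᵀ for 1 ≤ ℓ < m ≤ 4. Then for the maximally entangled state |φ₄⟩ ∈ ℂ⁴⊗ℂ⁴, the CHSH value ⟨φ₄| (X_ℓ + X_m) ⊗ Y_{ℓm,+} + (X_ℓ − X_m) ⊗ Y_{ℓm,−} |φ₄⟩ equals 2√2 for every pair ℓ < m, and hence the sum over all six pairs equals 12√2. -/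

import Mathlib

/-!
For the maximally entangled vector `φ = c ∑ᵢ |i⟩|i⟩` one has `⟨φ| A ⊗ B |φ⟩ = |c|² tr (A Bᵀ)`.
With `Y_± = (X_ℓ ± X_m)ᵀ / √2` the CHSH value is therefore
`|c|² tr ((X_ℓ + X_m)² + (X_ℓ - X_m)²) / √2`, and since every `X_ℓ` squares to the identity the
parallelogram law turns the trace into `4 tr 1 = 16`; with `|c|² = 1/4` this is `2√2`.
-/

open Matrix Kronecker

noncomputable def sX : Matrix (Fin 2) (Fin 2) ℂ := !![0, 1; 1, 0]
noncomputable def sY : Matrix (Fin 2) (Fin 2) ℂ := !![0, -Complex.I; Complex.I, 0]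
noncomputable def sZ : Matrix (Fin 2) (Fin 2) ℂ := !![1, 0; 0, -1]

noncomputable def Xmat : Fin 4 → Matrix (Fin 2 × Fin 2) (Fin 2 × Fin 2) ℂ
  | 0 => sZ ⊗ₖ (1 : Matrix (Fin 2) (Fin 2) ℂ)
  | 1 => sX ⊗ₖ (1 : Matrix (Fin 2) (Fin 2) ℂ)
  | 2 => sY ⊗ₖ sZ
  | 3 => sY ⊗ₖ sY

/-- Y_{ℓm,+} = (1/√2)(X_ℓ + X_m)ᵀ. -/
noncomputable def Yp (ℓ m : Fin 4) : Matrix (Fin 2 × Fin 2) (Fin 2 × Fin 2) ℂ :=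
  ((Real.sqrt 2 : ℂ))⁻¹ • (Xmat ℓ + Xmat m)ᵀ

/-- Y_{ℓm,−} = (1/√2)(X_ℓ − X_m)ᵀ. -/
noncomputable def Ym (ℓ m : Fin 4) : Matrix (Fin 2 × Fin 2) (Fin 2 × Fin 2) ℂ :=
  ((Real.sqrt 2 : ℂ))⁻¹ • (Xmat ℓ - Xmat m)ᵀ

/-- The maximally entangled state |φ₄⟩. -/
noncomputable def phi4 : (Fin 2 × Fin 2) × (Fin 2 × Fin 2) → ℂ :=
  fun p => if p.1 = p.2 then (1 / 2 : ℂ) else 0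

/-- CHSH value of the strategy (φ₄; X_ℓ, X_m; Y_{ℓm,+}, Y_{ℓm,−}). -/
noncomputable def CHSHval (ℓ m : Fin 4) : ℂ :=
  star phi4 ⬝ᵥ
    (((Xmat ℓ + Xmat m) ⊗ₖ Yp ℓ m + (Xmat ℓ - Xmat m) ⊗ₖ Ym ℓ m).mulVec phi4)

section MaximallyEntangled

variable {n R : Type*} [Fintype n] [DecidableEq n]

def maxEntangled [Zero R] (c : R) : n × n → R := fun p => if p.1 = p.2 then c else 0

lemma star_maxEntangled_dotProduct_kronecker_mulVec [CommSemiring R] [StarRing R] (c : R)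
    (A B : Matrix n n R) :
    star (maxEntangled c) ⬝ᵥ ((A ⊗ₖ B) *ᵥ maxEntangled c)
      = star c * c * trace (A * Bᵀ) := by
  simp only [maxEntangled, dotProduct, mulVec, Pi.star_apply, kroneckerMap_apply,
    Fintype.sum_prod_type, apply_ite star, star_zero, mul_ite, mul_zero, ite_mul, zero_mul,
    Finset.sum_ite_eq, Finset.mem_univ, if_true, trace, diag, mul_apply, transpose_apply,
    Finset.mul_sum, Finset.sum_ite_irrel, Finset.sum_const_zero]
  exact Finset.sum_congr rfl fun _ _ => Finset.sum_congr rfl fun _ _ => by ring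

lemma star_maxEntangled_dotProduct_chsh_mulVec [CommRing R] [StarRing R] (c s : R)
    {A B : Matrix n n R} (hA : A * A = 1) (hB : B * B = 1) :
    star (maxEntangled c) ⬝ᵥ
        (((A + B) ⊗ₖ (s • (A + B)ᵀ) + (A - B) ⊗ₖ (s • (A - B)ᵀ)) *ᵥ maxEntangled c)
      = 4 * s * star c * c * Fintype.card n := by
  have parallelogram : (A + B) * (A + B) + (A - B) * (A - B) = (4 : R) • 1 := by
    have h : (A + B) * (A + B) + (A - B) * (A - B) = 2 • (A * A + B * B) := by noncomm_ring
    rw [h, hA, hB]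
    module
  rw [kronecker_smul, kronecker_smul, ← smul_add, smul_mulVec, dotProduct_smul, add_mulVec,
    dotProduct_add, star_maxEntangled_dotProduct_kronecker_mulVec,
    star_maxEntangled_dotProduct_kronecker_mulVec, transpose_transpose, transpose_transpose,
    ← mul_add, ← trace_add, parallelogram, trace_smul, trace_one, smul_eq_mul, smul_eq_mul]
  ring

end MaximallyEntangled

lemma sX_mul_self : sX * sX = 1 := by
  ext i j; fin_cases i <;> fin_cases j <;> simp [sX]

lemma sY_mul_self : sY * sY = 1 := by
  ext i j; fin_cases i <;> fin_cases j <;> simp [sY]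

lemma sZ_mul_self : sZ * sZ = 1 := by
  ext i j; fin_cases i <;> fin_cases j <;> simp [sZ]

lemma Xmat_mul_self (ℓ : Fin 4) : Xmat ℓ * Xmat ℓ = 1 := by
  fin_cases ℓ <;>
    simp only [Xmat, ← mul_kronecker_mul, sX_mul_self, sY_mul_self, sZ_mul_self, mul_one,
      one_kronecker_one]

lemma CHSHval_eq (ℓ m : Fin 4) : CHSHval ℓ m = (2 * Real.sqrt 2 : ℝ) := by
  have hphi4 : phi4 = maxEntangled (1 / 2 : ℂ) := rfl
  have hsqrt : (Real.sqrt 2 : ℂ) ^ 2 = 2 := by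
    rw [← Complex.ofReal_pow, Real.sq_sqrt zero_le_two, Complex.ofReal_ofNat]
  rw [CHSHval, Yp, Ym, hphi4,
    star_maxEntangled_dotProduct_chsh_mulVec _ _ (Xmat_mul_self ℓ) (Xmat_mul_self m)]
  simp only [Fintype.card_prod, Fintype.card_fin, star_div₀, star_one, star_ofNat,
    Complex.ofReal_mul, Complex.ofReal_ofNat]
  push_cast
  field_simp
  linear_combination -8 * hsqrt

theorem stmt19 :
    (∀ ℓ m : Fin 4, ℓ < m → CHSHval ℓ m = (2 * Real.sqrt 2 : ℝ)) ∧
    (∑ p ∈ Finset.univ.filter (fun p : Fin 4 × Fin 4 => p.1 < p.2),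
        CHSHval p.1 p.2) = (12 * Real.sqrt 2 : ℝ) := by
  refine ⟨fun ℓ m _ => CHSHval_eq ℓ m, ?_⟩
  have hcard : (Finset.univ.filter fun p : Fin 4 × Fin 4 => p.1 < p.2).card = 6 := by decide
  rw [Finset.sum_congr rfl fun p _ => CHSHval_eq p.1 p.2, Finset.sum_const, hcard]
  push_cast
  ring
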